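/- arXiv:2303.08139 — 2 statements merged into one kernel-verified Lean document; each statement's English description precedes it below -/
import Mathlib

section
/- For $\alpha_n \to 0+$, the sum $\sum_{j=1}^\infty \frac{\alpha_n j\, e^{-\alpha_n j}}{1 - e^{-\alpha_n j}}\, \alpha_n$ converges to $\int_0^\infty \frac{s e^{-s}}{1-e^{-s}}\, ds = \pi^2/6$; consequently $\mathsf{E}(N) = \sum_{j=1}^\infty \frac{j e^{-\alpha_n j}}{1 - e^{-\alpha_n j}} \sim \frac{\pi^2}{6\, \alpha_n^2}$. -/
/-!
With `q = e^{-α}`, both `∑ n qⁿ/(1 - qⁿ)` and `∑ qⁿ/(1 - qⁿ)²` equal the double sum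
`∑_{d,n ≥ 1} n q^{dn}`, so `α² E(N) = ∑_k α² e^{-αk}/(1 - e^{-αk})²`. Since
`e^{-x}/(1 - e^{-x})² = (2 sinh (x/2))⁻²`, the `k`-th term is `k⁻² ((αk/2) / sinh (αk/2))²`:
it tends to `k⁻²` as `α → 0` and is bounded by `k⁻²` because `|y| ≤ |sinh y|`, so dominated
convergence gives the limit `ζ(2) = π²/6`. Expanding `e^{-s}/(1 - e^{-s})` as a geometric series
gives the integral as `∑_k ∫₀^∞ s e^{-ks} ds = ζ(2)` as well.
-/

open MeasureTheory Filter Set Real Topology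

section PNatGeometric

variable {𝕜 : Type*} [NormedField 𝕜] {q : 𝕜}

lemma tsum_pnat_geometric_of_norm_lt_one (hq : ‖q‖ < 1) :
    ∑' n : ℕ+, q ^ (n : ℕ) = q / (1 - q) := by
  rw [tsum_pnat_eq_tsum_succ (f := (q ^ ·))]
  simp only [pow_succ, tsum_mul_right, tsum_geometric_of_norm_lt_one hq, div_eq_inv_mul]

lemma tsum_pnat_coe_mul_geometric_of_norm_lt_one (hq : ‖q‖ < 1) :
    ∑' n : ℕ+, (n : 𝕜) * q ^ (n : ℕ) = q / (1 - q) ^ 2 := by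
  rw [← tsum_coe_mul_geometric_of_norm_lt_one hq,
    ← tsum_zero_pnat_eq_tsum_nat (hasSum_coe_mul_geometric_of_norm_lt_one hq).summable]
  simp

end PNatGeometric

theorem tsum_pnat_coe_mul_pow_div_one_sub_pow {𝕜 : Type*} [NontriviallyNormedField 𝕜]
    [CompleteSpace 𝕜] [NormSMulClass ℤ 𝕜] {q : 𝕜} (hq : ‖q‖ < 1) :
    ∑' n : ℕ+, (n : 𝕜) * q ^ (n : ℕ) / (1 - q ^ (n : ℕ)) =
      ∑' n : ℕ+, q ^ (n : ℕ) / (1 - q ^ (n : ℕ)) ^ 2 := by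
  have hpow (n : ℕ+) : ‖q ^ (n : ℕ)‖ < 1 := by
    rw [norm_pow]; exact pow_lt_one₀ (norm_nonneg _) hq n.ne_zero
  calc ∑' n : ℕ+, (n : 𝕜) * q ^ (n : ℕ) / (1 - q ^ (n : ℕ))
      = ∑' (n : ℕ+) (d : ℕ+), (n : 𝕜) * q ^ (d * n : ℕ) := by
        refine tsum_congr fun n => ?_
        rw [mul_div_assoc, ← tsum_pnat_geometric_of_norm_lt_one (hpow n), ← tsum_mul_left]
        refine tsum_congr fun d => ?_
        rw [← pow_mul, mul_comm (n : ℕ)]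
    _ = ∑' (d : ℕ+) (n : ℕ+), (n : 𝕜) * q ^ (d * n : ℕ) :=
        Summable.tsum_comm (f := fun (d n : ℕ+) => (n : 𝕜) * q ^ (d * n : ℕ))
          ((summable_prod_mul_pow 1 hq).congr fun _ => by rw [pow_one]; rfl)
    _ = ∑' n : ℕ+, q ^ (n : ℕ) / (1 - q ^ (n : ℕ)) ^ 2 := by
        refine tsum_congr fun d => ?_
        rw [← tsum_pnat_coe_mul_geometric_of_norm_lt_one (hpow d)]
        refine tsum_congr fun n => ?_
        rw [pow_mul]

namespace Real

lemma exp_neg_mul_nat_add_one (a : ℝ) (k : ℕ) : exp (-(a * (k + 1))) = exp (-a) ^ (k + 1) := by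
  rw [← exp_nat_mul]
  push_cast
  ring_nf

lemma one_sub_exp_neg_eq (x : ℝ) : 1 - exp (-x) = 2 * sinh (x / 2) * exp (-(x / 2)) := by
  rw [sinh_eq, mul_div_cancel₀ _ two_ne_zero, sub_mul, ← exp_add, ← exp_add, add_neg_cancel,
    exp_zero, ← neg_add, add_halves]

lemma exp_neg_div_one_sub_exp_neg_sq (x : ℝ) :
    exp (-x) / (1 - exp (-x)) ^ 2 = (2 * sinh (x / 2))⁻¹ ^ 2 := by
  have hexp : exp (-(x / 2)) ^ 2 = exp (-x) := by rw [← exp_nat_mul]; ring_nf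
  rw [one_sub_exp_neg_eq, mul_pow, hexp, div_mul_cancel_right₀ (exp_pos _).ne', inv_pow]

lemma sq_div_sinh_sq_le_one (x : ℝ) : (x / sinh x) ^ 2 ≤ 1 := by
  rw [div_pow]
  refine div_le_one_of_le₀ (sq_le_sq.2 ?_) (sq_nonneg _)
  rw [abs_sinh]
  exact self_le_sinh_iff.2 (abs_nonneg x)

lemma tendsto_div_sinh_nhdsNE_zero : Tendsto (fun x => x / sinh x) (𝓝[≠] 0) (𝓝 1) := by
  have hslope := hasDerivAt_iff_tendsto_slope_zero.1 (hasDerivAt_sinh 0)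
  simp only [zero_add, sinh_zero, sub_zero, cosh_zero, smul_eq_mul] at hslope
  simpa [div_eq_inv_mul] using hslope.inv₀ one_ne_zero

lemma norm_exp_neg_lt_one {a : ℝ} (ha : 0 < a) : ‖exp (-a)‖ < 1 := by
  rwa [norm_of_nonneg (exp_pos _).le, exp_lt_one_iff, neg_lt_zero]

end Real


lemma hasSum_one_div_nat_add_one_sq :
    HasSum (fun k : ℕ => 1 / ((k : ℝ) + 1) ^ 2) (π ^ 2 / 6) := by
  simpa using (hasSum_nat_add_iff' 1).2 hasSum_zeta_two

lemma tsum_nat_add_one_mul_exp_neg_div_one_sub_exp_neg {a : ℝ} (ha : 0 < a) :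
    ∑' j : ℕ, ((j : ℝ) + 1) * exp (-(a * (j + 1))) / (1 - exp (-(a * (j + 1)))) =
      ∑' k : ℕ, exp (-(a * (k + 1))) / (1 - exp (-(a * (k + 1)))) ^ 2 := by
  have := tsum_pnat_coe_mul_pow_div_one_sub_pow (norm_exp_neg_lt_one ha)
  rw [tsum_pnat_eq_tsum_succ (f := fun n => (n : ℝ) * exp (-a) ^ n / (1 - exp (-a) ^ n)),
    tsum_pnat_eq_tsum_succ (f := fun n => exp (-a) ^ n / (1 - exp (-a) ^ n) ^ 2)] at this
  simpa only [exp_neg_mul_nat_add_one, Nat.cast_add, Nat.cast_one] using this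

theorem tendsto_tsum_sq_mul_exp_neg_div_one_sub_exp_neg_sq {ι : Type*} {l : Filter ι}
    {α : ι → ℝ} (hα : Tendsto α l (𝓝[≠] 0)) :
    Tendsto (fun i => ∑' k : ℕ,
        α i ^ 2 * (exp (-(α i * (k + 1))) / (1 - exp (-(α i * (k + 1)))) ^ 2))
      l (𝓝 (π ^ 2 / 6)) := by
  have hterm (a : ℝ) (k : ℕ) :
      a ^ 2 * (exp (-(a * (k + 1))) / (1 - exp (-(a * (k + 1)))) ^ 2) =
        1 / ((k : ℝ) + 1) ^ 2 * (a * (k + 1) / 2 / sinh (a * (k + 1) / 2)) ^ 2 := by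
    rw [exp_neg_div_one_sub_exp_neg_sq]
    field_simp
  simp only [hterm]
  rw [← hasSum_one_div_nat_add_one_sq.tsum_eq]
  refine tendsto_tsum_of_dominated_convergence hasSum_one_div_nat_add_one_sq.summable
    (fun k => ?_) (.of_forall fun i k => ?_)
  · obtain ⟨hα₀, hα_ne⟩ := tendsto_nhdsWithin_iff.1 hα
    have hk : ((k : ℝ) + 1) / 2 ≠ 0 := by positivity
    have harg : Tendsto (fun i => α i * (k + 1) / 2) l (𝓝[≠] 0) := by
      simp only [mul_div_assoc]
      refine tendsto_nhdsWithin_iff.2 ⟨by simpa using hα₀.mul_const (((k : ℝ) + 1) / 2), ?_⟩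
      filter_upwards [hα_ne] with i hi
      exact mul_ne_zero hi hk
    simpa only [one_pow, mul_one, Function.comp_def] using
      ((tendsto_div_sinh_nhdsNE_zero.comp harg).pow 2).const_mul (1 / ((k : ℝ) + 1) ^ 2)
  · rw [norm_of_nonneg (by positivity)]
    exact mul_le_of_le_one_right (by positivity) (sq_div_sinh_sq_le_one _)

lemma integrableOn_mul_exp_neg_mul_Ioi {r : ℝ} (hr : 0 < r) :
    IntegrableOn (fun s => s * exp (-(r * s))) (Ioi 0) := by
  refine (integrableOn_rpow_mul_exp_neg_mul_rpow (p := 1) (s := 1) (by norm_num) one_pos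
    hr).congr_fun (fun s _ => ?_) measurableSet_Ioi
  simp [rpow_one]

lemma integral_mul_exp_neg_mul_Ioi {r : ℝ} (hr : 0 < r) :
    ∫ s in Ioi (0 : ℝ), s * exp (-(r * s)) = 1 / r ^ 2 := by
  have h := integral_rpow_mul_exp_neg_mul_Ioi two_pos hr
  norm_num [Gamma_two] at h
  simpa using h

theorem integral_mul_exp_neg_div_one_sub_exp_neg :
    ∫ s in Ioi (0 : ℝ), s * exp (-s) / (1 - exp (-s)) = π ^ 2 / 6 := by
  have hr (k : ℕ) : (0 : ℝ) < k + 1 := by positivity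
  have hnorm (k : ℕ) : ∫ s in Ioi (0 : ℝ), ‖s * exp (-((k + 1) * s))‖ = 1 / ((k : ℝ) + 1) ^ 2 := by
    rw [← integral_mul_exp_neg_mul_Ioi (hr k)]
    exact setIntegral_congr_fun measurableSet_Ioi fun s hs =>
      norm_of_nonneg (mul_nonneg (le_of_lt hs) (exp_pos _).le)
  have hswap := integral_tsum_of_summable_integral_norm
    (fun k => integrableOn_mul_exp_neg_mul_Ioi (hr k))
    (by simpa only [hnorm] using hasSum_one_div_nat_add_one_sq.summable)
  simp only [integral_mul_exp_neg_mul_Ioi (hr _), hasSum_one_div_nat_add_one_sq.tsum_eq] at hswap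
  rw [hswap]
  refine setIntegral_congr_fun measurableSet_Ioi fun s hs => ?_
  have hterm (k : ℕ) : s * exp (-((k + 1) * s)) = s * exp (-s) ^ (k + 1) := by
    rw [mul_comm _ s, exp_neg_mul_nat_add_one]
  simp only [hterm]
  rw [tsum_mul_left, ← tsum_pnat_eq_tsum_succ (f := (exp (-s) ^ ·)),
    tsum_pnat_geometric_of_norm_lt_one (norm_exp_neg_lt_one hs), mul_div_assoc]

/-- For `α_n → 0+`, the Riemann sum
`∑_j α_n j e^{-α_n j}/(1 - e^{-α_n j}) · α_n` converges to
`∫_0^∞ s e^{-s}/(1-e^{-s}) ds = π²/6`; consequently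
`E(N) = ∑_j j e^{-α_n j}/(1 - e^{-α_n j}) ~ π²/(6 α_n²)`. -/
theorem expected_partition_size_asymp (α : ℕ → ℝ) (hpos : ∀ n, 0 < α n)
    (hα : Tendsto α atTop (nhds 0)) :
    (∫ s in Ioi (0:ℝ), s * Real.exp (-s) / (1 - Real.exp (-s))) = π ^ 2 / 6 ∧
    Tendsto (fun n => ∑' j : ℕ,
        α n * ((j : ℝ) + 1) * Real.exp (-(α n * ((j : ℝ) + 1)))
          / (1 - Real.exp (-(α n * ((j : ℝ) + 1)))) * α n)
      atTop (nhds (π ^ 2 / 6)) ∧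
    Tendsto (fun n => (∑' j : ℕ,
        ((j : ℝ) + 1) * Real.exp (-(α n * ((j : ℝ) + 1)))
          / (1 - Real.exp (-(α n * ((j : ℝ) + 1)))))
        / (π ^ 2 / (6 * (α n) ^ 2)))
      atTop (nhds 1) := by
  have hscale (n : ℕ) : ∑' j : ℕ, α n * ((j : ℝ) + 1) * exp (-(α n * ((j : ℝ) + 1)))
        / (1 - exp (-(α n * ((j : ℝ) + 1)))) * α n =
      α n ^ 2 * ∑' j : ℕ, ((j : ℝ) + 1) * exp (-(α n * ((j : ℝ) + 1)))
        / (1 - exp (-(α n * ((j : ℝ) + 1)))) := by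
    rw [← tsum_mul_left]
    exact tsum_congr fun j => by ring
  have hriemann : Tendsto (fun n => ∑' j : ℕ, α n * ((j : ℝ) + 1) * exp (-(α n * ((j : ℝ) + 1)))
        / (1 - exp (-(α n * ((j : ℝ) + 1)))) * α n) atTop (𝓝 (π ^ 2 / 6)) := by
    refine (tendsto_tsum_sq_mul_exp_neg_div_one_sub_exp_neg_sq
      (tendsto_nhdsWithin_iff.2 ⟨hα, .of_forall fun n => (hpos n).ne'⟩)).congr fun n => ?_
    rw [hscale, tsum_nat_add_one_mul_exp_neg_div_one_sub_exp_neg (hpos n), tsum_mul_left]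
  refine ⟨integral_mul_exp_neg_div_one_sub_exp_neg, hriemann, ?_⟩
  have hlim := hriemann.mul_const (6 / π ^ 2)
  rw [div_mul_div_cancel₀ (by positivity), div_self (by positivity)] at hlim
  refine hlim.congr fun n => ?_
  rw [hscale]
  field_simp
end

section
/- For independent random variables with geometric multiplicities $M_j \sim \mathrm{Geom}(1-z^j)$ with $z = e^{-\alpha}$, $\alpha \to 0+$, the expected number of parts satisfies $\mathsf{E}(M) = \sum_{j=1}^\infty \frac{e^{-\alpha j}}{1 - e^{-\alpha j}} \sim \alpha^{-1}(-\log \alpha)$ as $\alpha \to 0+$. -/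
open Filter Set Real Asymptotics Topology

/-! With `z = e^{-α}`, the inequalities `(y - x)/y ≤ log y - log x ≤ (y - x)/x` squeeze the term
`z^j/(1 - z^j)` between `(1 - z)⁻¹` and `z (1 - z)⁻¹` times consecutive differences of
`log (1 - z^j)`, which telescope to `-log (1 - z)`. Hence
`(1 - z)⁻¹ (-log (1 - z)) ≤ E(M) ≤ z (1 - z)⁻¹ (1 - log (1 - z))`, and since `1 - e^{-α} ~ α`,
so that `-log (1 - e^{-α}) ~ -log α`, both bounds are `~ α⁻¹ (-log α)`. -/

theorem Asymptotics.isEquivalent_of_le_of_le {ι : Type*} {l : Filter ι} {f g h u : ι → ℝ}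
    (hg : g ~[l] u) (hh : h ~[l] u) (hgf : g ≤ᶠ[l] f) (hfh : f ≤ᶠ[l] h) : f ~[l] u := by
  refine IsLittleO.isEquivalent <| IsBigO.trans_isLittleO (g := fun x => |g x - u x| + |h x - u x|)
    ?_ (hg.isLittleO.norm_left.add hh.isLittleO.norm_left)
  refine IsBigO.of_bound' ?_
  filter_upwards [hgf, hfh] with x hgx hxh
  rw [Pi.sub_apply, Real.norm_eq_abs, Real.norm_of_nonneg (by positivity)]
  calc |f x - u x| ≤ max |g x - u x| |h x - u x| := abs_le_max_abs_abs (by linarith) (by linarith)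
    _ ≤ |g x - u x| + |h x - u x| := max_le_add_of_nonneg (abs_nonneg _) (abs_nonneg _)

theorem Asymptotics.IsEquivalent.neg_log {ι : Type*} {l : Filter ι} {f g : ι → ℝ}
    (hfg : f ~[l] g) (hg : Tendsto g l (𝓝[>] 0)) :
    (fun x => -Real.log (f x)) ~[l] fun x => -Real.log (g x) := by
  simpa only [Pi.inv_apply, log_inv] using hfg.inv.log (tendsto_inv_nhdsGT_zero.comp hg)

theorem isEquivalent_one_sub_exp_neg : (fun x : ℝ => 1 - exp (-x)) ~[𝓝 0] id := by
  have hderiv : HasDerivAt (fun x : ℝ => 1 - exp (-x)) 1 0 := by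
    simpa using ((hasDerivAt_neg (0 : ℝ)).exp).const_sub 1
  exact (by simpa using hderiv.isLittleO : (fun x : ℝ => 1 - exp (-x) - x) =o[𝓝 0] fun x => x)

theorem hasSum_succ_sub_of_monotone {f : ℕ → ℝ} {a : ℝ} (hf : Monotone f)
    (hfa : Tendsto f atTop (𝓝 a)) : HasSum (fun n => f (n + 1) - f n) (a - f 0) := by
  refine (hasSum_iff_tendsto_nat_of_nonneg (fun n => sub_nonneg.2 (hf n.le_succ)) _).2 ?_
  simpa only [Finset.sum_range_sub] using hfa.sub_const (f 0)

theorem log_sub_log_le_sub_div {x y : ℝ} (hx : 0 < x) (hy : 0 < y) :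
    log y - log x ≤ (y - x) / x := by
  have := log_le_sub_one_of_pos (div_pos hy hx)
  rwa [log_div hy.ne' hx.ne', div_sub_one hx.ne'] at this

theorem sub_div_le_log_sub_log {x y : ℝ} (hx : 0 < x) (hy : 0 < y) :
    (y - x) / y ≤ log y - log x := by
  have := log_sub_log_le_sub_div hy hx
  rw [← neg_sub y x, neg_div] at this
  linarith

section Geometric

variable {z : ℝ}

theorem hasSum_log_one_sub_pow_succ_sub (hz0 : 0 < z) (hz1 : z < 1) :
    HasSum (fun n : ℕ => Real.log (1 - z ^ (n + 2)) - Real.log (1 - z ^ (n + 1)))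
      (-Real.log (1 - z)) := by
  have hmono : Monotone fun n : ℕ => Real.log (1 - z ^ (n + 1)) := fun m n hmn =>
    log_le_log (sub_pos.2 (pow_lt_one₀ hz0.le hz1 m.succ_ne_zero))
      (sub_le_sub_left (pow_le_pow_of_le_one hz0.le hz1.le (by omega)) 1)
  have hlim : Tendsto (fun n : ℕ => Real.log (1 - z ^ (n + 1))) atTop (𝓝 0) := by
    have := ((tendsto_pow_atTop_nhds_zero_of_lt_one hz0.le hz1).comp
      (tendsto_add_atTop_nat 1)).const_sub 1
    simpa [Function.comp_def] using
      (continuousAt_log one_ne_zero).tendsto.comp (by simpa using this)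
  simpa using hasSum_succ_sub_of_monotone hmono hlim

theorem log_one_sub_pow_succ_sub_le (hz0 : 0 < z) (hz1 : z < 1) (n : ℕ) :
    Real.log (1 - z ^ (n + 2)) - Real.log (1 - z ^ (n + 1))
      ≤ (1 - z) * (z ^ (n + 1) / (1 - z ^ (n + 1))) := by
  have ha : 0 < 1 - z ^ (n + 1) := sub_pos.2 (pow_lt_one₀ hz0.le hz1 (by omega))
  have hb : 0 < 1 - z ^ (n + 2) := sub_pos.2 (pow_lt_one₀ hz0.le hz1 (by omega))
  convert log_sub_log_le_sub_div ha hb using 1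
  ring

theorem le_log_one_sub_pow_succ_sub (hz0 : 0 < z) (hz1 : z < 1) (n : ℕ) :
    (1 - z) / z * (z ^ (n + 2) / (1 - z ^ (n + 2)))
      ≤ Real.log (1 - z ^ (n + 2)) - Real.log (1 - z ^ (n + 1)) := by
  have ha : 0 < 1 - z ^ (n + 1) := sub_pos.2 (pow_lt_one₀ hz0.le hz1 (by omega))
  have hb : 0 < 1 - z ^ (n + 2) := sub_pos.2 (pow_lt_one₀ hz0.le hz1 (by omega))
  convert sub_div_le_log_sub_log ha hb using 1
  field_simp
  ring

theorem summable_pow_succ_div_one_sub_pow_succ (hz0 : 0 < z) (hz1 : z < 1) :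
    Summable fun n : ℕ => z ^ (n + 1) / (1 - z ^ (n + 1)) := by
  refine (summable_nat_add_iff 1).mp <| Summable.of_nonneg_of_le (fun n => ?_) (fun n => ?_)
    ((hasSum_log_one_sub_pow_succ_sub hz0 hz1).summable.mul_left (z / (1 - z)))
  · exact div_nonneg (pow_nonneg hz0.le _) (sub_nonneg.2 (pow_le_one₀ hz0.le hz1.le))
  · have h := le_log_one_sub_pow_succ_sub hz0 hz1 n
    have h1z : 0 < 1 - z := sub_pos.2 hz1
    calc z ^ (n + 1 + 1) / (1 - z ^ (n + 1 + 1))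
        = z / (1 - z) * ((1 - z) / z * (z ^ (n + 2) / (1 - z ^ (n + 2)))) := by field_simp
      _ ≤ _ := mul_le_mul_of_nonneg_left h (by positivity)

theorem le_tsum_pow_succ_div_one_sub_pow_succ (hz0 : 0 < z) (hz1 : z < 1) :
    (1 - z)⁻¹ * -Real.log (1 - z) ≤ ∑' n : ℕ, z ^ (n + 1) / (1 - z ^ (n + 1)) := by
  have hS := (summable_pow_succ_div_one_sub_pow_succ hz0 hz1).hasSum
  rw [inv_mul_le_iff₀ (sub_pos.2 hz1)]
  exact hasSum_le (log_one_sub_pow_succ_sub_le hz0 hz1) (hasSum_log_one_sub_pow_succ_sub hz0 hz1)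
    (hS.mul_left (1 - z))

theorem tsum_pow_succ_div_one_sub_pow_succ_le (hz0 : 0 < z) (hz1 : z < 1) :
    ∑' n : ℕ, z ^ (n + 1) / (1 - z ^ (n + 1)) ≤ z * (1 - z)⁻¹ * (1 + -Real.log (1 - z)) := by
  have h1z : 0 < 1 - z := sub_pos.2 hz1
  have hS := summable_pow_succ_div_one_sub_pow_succ hz0 hz1
  have htail : (1 - z) / z * ∑' n : ℕ, z ^ (n + 2) / (1 - z ^ (n + 2)) ≤ -Real.log (1 - z) := by
    rw [← tsum_mul_left]
    exact hasSum_le (le_log_one_sub_pow_succ_sub hz0 hz1)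
      (((summable_nat_add_iff 1).mpr hS).mul_left _).hasSum
      (hasSum_log_one_sub_pow_succ_sub hz0 hz1)
  rw [← le_div_iff₀' (by positivity)] at htail
  rw [hS.tsum_eq_zero_add]
  calc _ ≤ z / (1 - z) + -Real.log (1 - z) / ((1 - z) / z) := by simpa using htail
    _ = _ := by field_simp

end Geometric

/-- For geometric multiplicities with `z = e^{-α}`, the expected number of parts satisfies
`E(M) = ∑_{j≥1} e^{-αj}/(1 - e^{-αj}) ~ α⁻¹(-log α)` as `α → 0+`. -/
theorem expected_number_of_parts_asymp :
    Tendsto (fun α : ℝ =>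
        (∑' j : ℕ, Real.exp (-(α * ((j : ℝ) + 1))) / (1 - Real.exp (-(α * ((j : ℝ) + 1)))))
          / (α⁻¹ * (-Real.log α)))
      (nhdsWithin 0 (Ioi 0)) (nhds 1) := by
  have hpow (α : ℝ) (j : ℕ) : exp (-(α * ((j : ℝ) + 1))) = exp (-α) ^ (j + 1) := by
    rw [← exp_nat_mul]; push_cast; ring_nf
  simp_rw [hpow]
  have hq : (fun α : ℝ => 1 - exp (-α)) ~[𝓝[>] 0] id :=
    isEquivalent_one_sub_exp_neg.mono nhdsWithin_le_nhds
  have hlog : (fun α : ℝ => -Real.log (1 - exp (-α))) ~[𝓝[>] 0] fun α => -Real.log α :=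
    hq.neg_log tendsto_id
  have hz : (fun α : ℝ => exp (-α)) ~[𝓝[>] 0] fun _ => 1 :=
    (isEquivalent_const_iff_tendsto one_ne_zero).2 <|
      ((by fun_prop : Continuous fun α : ℝ => exp (-α)).tendsto' 0 1 (by simp)).mono_left
        nhdsWithin_le_nhds
  have hupper := (hz.mul hq.inv).mul <| hlog.const_add_of_norm_tendsto_atTop (c := 1) <|
    tendsto_norm_atTop_atTop.comp (tendsto_neg_atBot_atTop.comp tendsto_log_nhdsGT_zero)
  have hS : (fun α : ℝ => ∑' j : ℕ, exp (-α) ^ (j + 1) / (1 - exp (-α) ^ (j + 1)))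
      ~[𝓝[>] 0] fun α => α⁻¹ * -Real.log α := by
    refine isEquivalent_of_le_of_le (hq.inv.mul hlog)
      (hupper.congr_right (.of_forall fun α => by simp)) ?_ ?_ <;>
    filter_upwards [self_mem_nhdsWithin] with α (hα : 0 < α)
    · exact le_tsum_pow_succ_div_one_sub_pow_succ (exp_pos _) (exp_lt_one_iff.2 (neg_lt_zero.2 hα))
    · exact tsum_pow_succ_div_one_sub_pow_succ_le (exp_pos _) (exp_lt_one_iff.2 (neg_lt_zero.2 hα))
  refine (isEquivalent_iff_tendsto_one ?_).mp hS
  filter_upwards [Ioo_mem_nhdsGT (zero_lt_one' ℝ)] with α ⟨hα0, hα1⟩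
  exact mul_ne_zero (inv_ne_zero hα0.ne') (neg_ne_zero.2 (log_neg hα0 hα1).ne)
end
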